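/- arXiv:1509.05677 — 2 statements merged into one kernel-verified Lean document; each statement's English description precedes it below -/
import Mathlib

section
/- Let T be a nonempty set, u, v : T → ℝ with v(x) > 0 for every x ∈ T, and let a, A, C be real numbers with C ≥ 1 and a·v(x) ≤ u(x) ≤ A·v(x) for every x ∈ T. Assume that for all x, y ∈ T one has u(x) − a·v(x) ≤ C·(v(x)/v(y))·(u(y) − a·v(y)) and A·v(x) − u(x) ≤ C·(v(x)/v(y))·(A·v(y) − u(y)). Then for all x, y ∈ T, (C + 1)·(u(x)/v(x) − u(y)/v(y)) ≤ (C − 1)·(A − a). -/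
/-- Oscillation reduction lemma (Lemma 4.3) in abstract form. -/
theorem oscillation_reduction {T : Type*} [Nonempty T] (u v : T → ℝ)
    (hv : ∀ x, 0 < v x) (a A C : ℝ) (hC : 1 ≤ C)
    (hlow : ∀ x, a * v x ≤ u x) (hupp : ∀ x, u x ≤ A * v x)
    (h1 : ∀ x y, u x - a * v x ≤ C * (v x / v y) * (u y - a * v y))
    (h2 : ∀ x y, A * v x - u x ≤ C * (v x / v y) * (A * v y - u y)) :
    ∀ x y, (C + 1) * (u x / v x - u y / v y) ≤ (C - 1) * (A - a) := by
  intro x y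
  have hvx := hv x
  have hvy := hv y
  have e1 := h1 x y
  have e2 := h2 y x
  have h1' : (u x - a * v x) * v y ≤ C * v x * (u y - a * v y) := by
    rw [← le_div_iff₀ hvy]
    have hr : C * (v x / v y) * (u y - a * v y) = C * v x * (u y - a * v y) / v y := by
      field_simp
    linarith [e1, hr.ge, hr.le]
  have h2' : (A * v y - u y) * v x ≤ C * v y * (A * v x - u x) := by
    rw [← le_div_iff₀ hvx]
    have hr : C * (v y / v x) * (A * v x - u x) = C * v y * (A * v x - u x) / v x := by
      field_simp
    linarith [e2, hr.ge, hr.le]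
  have hsub : u x / v x - u y / v y = (u x * v y - u y * v x) / (v x * v y) := by
    field_simp
  rw [hsub, ← mul_div_assoc, div_le_iff₀ (mul_pos hvx hvy)]
  nlinarith [h1', h2']
end

section
/- Fix an integer d ≥ 1, α ∈ (0, 2), a point x0 ∈ ℝ^d, and R > 0. Let φ : ℝ^d → ℝ be continuous on the unit sphere with φ(θ) > 0 for every unit vector θ, and define ν(z) = φ(z/‖z‖)·‖z‖^(−d−α) for z ∈ ℝ^d \ {0} (using the Euclidean norm and real powers). Then for every ε > 0 there exists r₀ ∈ (0, R) such that for every x with ‖x − x0‖ < r₀ and every y with ‖y − x0‖ ≥ R, one has (1 + ε)⁻¹·ν(y − x0) ≤ ν(y − x) ≤ (1 + ε)·ν(y − x0). -/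
/-!
By homogeneity, `ν (y - x) / ν (y - x0) = ν (θ - t) / ν θ` with `θ` the direction of `y - x0` and
`t = (x - x0) / ‖y - x0‖`, so `‖t‖ ≤ ‖x - x0‖ / R`. The strict two-sided comparison holds at
`t = 0` because `ν θ > 0`, hence near `(0, θ)` by continuity, and by the tube lemma uniformly over
the compact unit sphere.
-/

open Metric Topology

theorem IsCompact.eventually_forall_comparison_sub {E : Type*} [AddGroup E] [TopologicalSpace E]
    [ContinuousSub E] {f : E → ℝ} {K : Set E} (hK : IsCompact K)
    (hf : ∀ θ ∈ K, ContinuousAt f θ) (hpos : ∀ θ ∈ K, 0 < f θ) {ε : ℝ} (hε : 0 < ε) :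
    ∀ᶠ t in 𝓝 (0 : E), ∀ θ ∈ K,
      (1 + ε)⁻¹ * f θ < f (θ - t) ∧ f (θ - t) < (1 + ε) * f θ := by
  refine hK.eventually_forall_of_forall_eventually fun θ hθ => ?_
  have hf_snd : ContinuousAt (fun z : E × E => f z.2) (0, θ) :=
    (hf θ hθ).comp continuousAt_snd
  have hf_sub : ContinuousAt (fun z : E × E => f (z.2 - z.1)) (0, θ) :=
    ContinuousAt.comp (by simpa using hf θ hθ) (continuous_snd.sub continuous_fst).continuousAt
  have h1ε : 1 < 1 + ε := lt_add_of_pos_right 1 hε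
  refine (ContinuousAt.eventually_lt (continuous_const.continuousAt.mul hf_snd) hf_sub ?_).and
    (ContinuousAt.eventually_lt hf_sub (continuous_const.continuousAt.mul hf_snd) ?_)
  · simpa using mul_lt_of_lt_one_left (hpos θ hθ) (inv_lt_one_of_one_lt₀ h1ε)
  · simpa using lt_mul_left (hpos θ hθ) h1ε

section StableDensity

variable {E : Type*} [NormedAddCommGroup E] [NormedSpace ℝ E]

/-- With `p = -d - α` this is the Lévy density `ν` off the origin. -/
noncomputable def stableDensity (φ : E → ℝ) (p : ℝ) (z : E) : ℝ :=
  φ (‖z‖⁻¹ • z) * ‖z‖ ^ p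

variable {φ : E → ℝ} {p : ℝ}

theorem stableDensity_smul {c : ℝ} (hc : 0 < c) (z : E) :
    stableDensity φ p (c • z) = c ^ p * stableDensity φ p z := by
  have hdir : ‖c • z‖⁻¹ • (c • z) = ‖z‖⁻¹ • z := by
    rw [norm_smul, Real.norm_of_nonneg hc.le, smul_smul]
    congr 1
    field_simp
  rw [stableDensity, stableDensity, hdir, norm_smul, Real.norm_of_nonneg hc.le,
    Real.mul_rpow hc.le (norm_nonneg z)]
  ring

theorem stableDensity_pos (hφ : ∀ θ ∈ sphere (0 : E) 1, 0 < φ θ) {z : E} (hz : z ≠ 0) :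
    0 < stableDensity φ p z := by
  have hz' : 0 < ‖z‖ := norm_pos_iff.2 hz
  refine mul_pos (hφ _ ?_) (Real.rpow_pos_of_pos hz' p)
  rw [mem_sphere_zero_iff_norm, norm_smul, norm_inv, norm_norm, inv_mul_cancel₀ hz'.ne']

theorem continuousOn_stableDensity (hφ : ContinuousOn φ (sphere (0 : E) 1)) :
    ContinuousOn (stableDensity φ p) {0}ᶜ := by
  have hnorm : ∀ z ∈ ({0}ᶜ : Set E), ‖z‖ ≠ 0 := fun z hz => norm_ne_zero_iff.2 hz
  have hdir : ContinuousOn (fun z : E => ‖z‖⁻¹ • z) {0}ᶜ :=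
    (continuous_norm.continuousOn.inv₀ hnorm).smul continuousOn_id
  refine (hφ.comp hdir fun z hz => ?_).mul (continuous_norm.continuousOn.rpow_const
    fun z hz => Or.inl (hnorm z hz))
  rw [mem_sphere_zero_iff_norm, norm_smul, norm_inv, norm_norm, inv_mul_cancel₀ (hnorm z hz)]

theorem exists_stableDensity_sub_comparison [ProperSpace E]
    (hφc : ContinuousOn φ (sphere (0 : E) 1)) (hφp : ∀ θ ∈ sphere (0 : E) 1, 0 < φ θ)
    {ε : ℝ} (hε : 0 < ε) :
    ∃ δ > 0, ∀ u w : E, ‖w‖ < δ * ‖u‖ →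
      (1 + ε)⁻¹ * stableDensity φ p u < stableDensity φ p (u - w) ∧
        stableDensity φ p (u - w) < (1 + ε) * stableDensity φ p u := by
  have hcont : ∀ θ ∈ sphere (0 : E) 1, ContinuousAt (stableDensity φ p) θ := fun θ hθ =>
    (continuousOn_stableDensity hφc).continuousAt <| isOpen_compl_singleton.mem_nhds <|
      ne_zero_of_mem_unit_sphere ⟨θ, hθ⟩
  obtain ⟨δ, hδ, hsphere⟩ := Metric.eventually_nhds_iff.1 <|
    (isCompact_sphere (0 : E) 1).eventually_forall_comparison_sub hcont
      (fun θ hθ => stableDensity_pos hφp (ne_zero_of_mem_unit_sphere ⟨θ, hθ⟩)) hε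
  refine ⟨δ, hδ, fun u w hw => ?_⟩
  have hu : 0 < ‖u‖ := pos_of_mul_pos_right ((norm_nonneg w).trans_lt hw) hδ.le
  set θ := ‖u‖⁻¹ • u
  set t := ‖u‖⁻¹ • w
  have hθ : θ ∈ sphere (0 : E) 1 := by
    rw [mem_sphere_zero_iff_norm, norm_smul, norm_inv, norm_norm, inv_mul_cancel₀ hu.ne']
  have ht : dist t 0 < δ := by
    rw [dist_zero_right, norm_smul, norm_inv, norm_norm, inv_mul_lt_iff₀ hu, mul_comm]
    exact hw
  have hscale : ∀ v : E, ‖u‖ • ‖u‖⁻¹ • v = v := fun v => by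
    rw [smul_smul, mul_inv_cancel₀ hu.ne', one_smul]
  have hDu : stableDensity φ p u = ‖u‖ ^ p * stableDensity φ p θ := by
    rw [← stableDensity_smul hu, hscale]
  have hDuw : stableDensity φ p (u - w) = ‖u‖ ^ p * stableDensity φ p (θ - t) := by
    rw [← stableDensity_smul hu, smul_sub, hscale, hscale]
  obtain ⟨hlower, hupper⟩ := hsphere ht θ hθ
  have hc : 0 < ‖u‖ ^ p := Real.rpow_pos_of_pos hu p
  rw [hDu, hDuw, mul_left_comm, mul_left_comm (1 + ε)]
  exact ⟨mul_lt_mul_of_pos_left hlower hc, mul_lt_mul_of_pos_left hupper hc⟩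

end StableDensity

theorem stable_levy_density_comparison_limit_general (d : ℕ)
    (α : ℝ)
    (x0 : EuclideanSpace ℝ (Fin d)) (R : ℝ) (hR : 0 < R)
    (φ : EuclideanSpace ℝ (Fin d) → ℝ)
    (hφc : ContinuousOn φ {θ : EuclideanSpace ℝ (Fin d) | ‖θ‖ = 1})
    (hφp : ∀ θ : EuclideanSpace ℝ (Fin d), ‖θ‖ = 1 → 0 < φ θ)
    (ν : EuclideanSpace ℝ (Fin d) → ℝ)
    (hν : ∀ z : EuclideanSpace ℝ (Fin d), z ≠ 0 →
      ν z = φ (‖z‖⁻¹ • z) * ‖z‖ ^ (-(d : ℝ) - α)) :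
    ∀ ε > (0 : ℝ), ∃ r₀ ∈ Set.Ioo (0 : ℝ) R,
      ∀ x : EuclideanSpace ℝ (Fin d), ‖x - x0‖ < r₀ →
        ∀ y : EuclideanSpace ℝ (Fin d), R ≤ ‖y - x0‖ →
          (1 + ε)⁻¹ * ν (y - x0) ≤ ν (y - x) ∧ ν (y - x) ≤ (1 + ε) * ν (y - x0) := by
  intro ε hε
  obtain ⟨δ, hδ, hcomparison⟩ := exists_stableDensity_sub_comparison (p := -(d : ℝ) - α)
    (hφc.mono fun θ => mem_sphere_zero_iff_norm.1)
    (fun θ hθ => hφp θ (mem_sphere_zero_iff_norm.1 hθ)) hε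
  refine ⟨min (δ * R) (R / 2), ⟨by positivity, (min_le_right _ _).trans_lt (half_lt_self hR)⟩,
    fun x hx y hy => ?_⟩
  have hw : ‖x - x0‖ < δ * ‖y - x0‖ := hx.trans_le ((min_le_left _ _).trans (by gcongr))
  have hwR : ‖x - x0‖ < R := hx.trans_le ((min_le_right _ _).trans (half_le_self hR.le))
  have hu : y - x0 ≠ 0 := norm_pos_iff.1 (hR.trans_le hy)
  have huw : (y - x0) - (x - x0) ≠ 0 := sub_ne_zero.2 fun h => by
    rw [h] at hy
    linarith
  rw [← sub_sub_sub_cancel_right y x x0, hν _ hu, hν _ huw]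
  exact (hcomparison _ _ hw).imp le_of_lt le_of_lt

/-- Condition (ii) of Theorem 3.1 for strictly α-stable Lévy processes:
`C_Lévy(x0, r, R) → 1` as `r → 0⁺`. -/
theorem stable_levy_density_comparison_limit (d : ℕ) (hd : 1 ≤ d)
    (α : ℝ) (hα : α ∈ Set.Ioo (0 : ℝ) 2)
    (x0 : EuclideanSpace ℝ (Fin d)) (R : ℝ) (hR : 0 < R)
    (φ : EuclideanSpace ℝ (Fin d) → ℝ)
    (hφc : ContinuousOn φ {θ : EuclideanSpace ℝ (Fin d) | ‖θ‖ = 1})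
    (hφp : ∀ θ : EuclideanSpace ℝ (Fin d), ‖θ‖ = 1 → 0 < φ θ)
    (ν : EuclideanSpace ℝ (Fin d) → ℝ)
    (hν : ∀ z : EuclideanSpace ℝ (Fin d), z ≠ 0 →
      ν z = φ (‖z‖⁻¹ • z) * ‖z‖ ^ (-(d : ℝ) - α)) :
    ∀ ε > (0 : ℝ), ∃ r₀ ∈ Set.Ioo (0 : ℝ) R,
      ∀ x : EuclideanSpace ℝ (Fin d), ‖x - x0‖ < r₀ →
        ∀ y : EuclideanSpace ℝ (Fin d), R ≤ ‖y - x0‖ →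
          (1 + ε)⁻¹ * ν (y - x0) ≤ ν (y - x) ∧ ν (y - x) ≤ (1 + ε) * ν (y - x0) :=
  stable_levy_density_comparison_limit_general d α x0 R hR φ hφc hφp ν hν
end
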